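/- arXiv:2410.03957 — 3 statements merged into one kernel-verified Lean document; each statement's English description precedes it below -/
import Mathlib

section
/- For every integer n ≥ 1, the series ∑_{k≥0} (2k+1)² / [(2k+1)² − 4n²]² equals π²/16. -/
open Real Filter

lemma odd_basel' : HasSum (fun k : ℕ => 1 / (2 * (k:ℝ) + 1) ^ 2) (π ^ 2 / 8) := by
  have hs : Summable (fun k : ℕ => 1 / (2 * (k:ℝ) + 1) ^ 2) := by
    have hinj : Function.Injective (fun k : ℕ => 2 * k + 1) := fun a b h => by
      simpa using h
    have := hasSum_zeta_two.summable.comp_injective hinj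
    refine this.congr fun k => ?_
    simp only [Function.comp]
    push_cast
    ring_nf
  have he : HasSum (fun k : ℕ => (1:ℝ) / ((2 * k : ℕ) : ℝ) ^ 2) (π ^ 2 / 24) := by
    have h2 := hasSum_zeta_two.mul_left (4⁻¹)
    have h3 : (4:ℝ)⁻¹ * (π ^ 2 / 6) = π ^ 2 / 24 := by ring
    rw [h3] at h2
    refine h2.congr_fun fun k => ?_
    push_cast
    rcases Nat.eq_zero_or_pos k with rfl | hk
    · simp
    · have : (k:ℝ) ≠ 0 := Nat.cast_ne_zero.mpr hk.ne'
      field_simp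
      ring
  have ho := hs.hasSum
  have ho' : HasSum (fun k : ℕ => (1:ℝ) / ((2 * k + 1 : ℕ) : ℝ) ^ 2)
      (∑' k : ℕ, 1 / (2 * (k:ℝ) + 1) ^ 2) := by
    refine ho.congr_fun fun k => ?_
    push_cast
    ring_nf
  have htot := HasSum.even_add_odd (f := fun j : ℕ => 1 / (j:ℝ) ^ 2) he ho'
  have := htot.unique hasSum_zeta_two
  have hval : ∑' k : ℕ, 1 / (2 * (k:ℝ) + 1) ^ 2 = π ^ 2 / 8 := by linarith
  rwa [hval] at ho

theorem stmt0 (n : ℕ) (hn : 1 ≤ n) :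
    ∑' k : ℕ, (2 * (k : ℝ) + 1) ^ 2 / ((2 * (k : ℝ) + 1) ^ 2 - 4 * (n : ℝ) ^ 2) ^ 2
      = π ^ 2 / 16 := by
  set A : ℕ → ℝ := fun k => 1 / (2 * (k:ℝ) + 1 - 2 * n) ^ 2 with hAdef
  set B : ℕ → ℝ := fun k => 1 / (2 * (k:ℝ) + 1 + 2 * n) ^ 2 with hBdef
  set C : ℕ → ℝ := fun k => 1 / ((2 * (k:ℝ) + 1) ^ 2 - 4 * (n:ℝ) ^ 2) with hCdef
  set T : ℝ := ∑ i ∈ Finset.range n, 1 / (2 * (i:ℝ) + 1) ^ 2 with hTdef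
  have hp : ∀ k : ℕ, (2 * (k:ℝ) + 1 - 2 * n) ≠ 0 := by
    intro k h
    have hne : (2 * k + 1 : ℕ) ≠ 2 * n := by omega
    apply hne
    have : (2 * (k:ℝ) + 1) = 2 * n := by linarith
    exact_mod_cast this
  have hq : ∀ k : ℕ, (2 * (k:ℝ) + 1 + 2 * n) ≠ 0 := by
    intro k
    positivity
  have hd : ∀ k : ℕ, ((2 * (k:ℝ) + 1) ^ 2 - 4 * (n:ℝ) ^ 2) ≠ 0 := by
    intro k
    have : (2 * (k:ℝ) + 1) ^ 2 - 4 * (n:ℝ) ^ 2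
        = (2 * (k:ℝ) + 1 - 2 * n) * (2 * (k:ℝ) + 1 + 2 * n) := by ring
    rw [this]
    exact mul_ne_zero (hp k) (hq k)
  -- HasSum A (π^2/8 + T)
  have hA : HasSum A (π ^ 2 / 8 + T) := by
    have hsh : HasSum (fun k => A (k + n)) (π ^ 2 / 8) := by
      refine odd_basel'.congr_fun fun k => ?_
      simp only [hAdef]
      push_cast
      ring_nf
    have h1 := (hasSum_nat_add_iff (f := A) n).mp hsh
    have h2 : ∑ i ∈ Finset.range n, A i = T := by
      rw [hTdef, ← Finset.sum_range_reflect (fun i => A i) n]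
      refine Finset.sum_congr rfl fun j hj => ?_
      have hj' : j < n := Finset.mem_range.mp hj
      simp only [hAdef]
      have hc : ((n - 1 - j : ℕ) : ℝ) = (n:ℝ) - 1 - j := by
        have h1 : j ≤ n - 1 := by omega
        have h2 : 1 ≤ n := by omega
        push_cast [Nat.cast_sub h1, Nat.cast_sub h2]
        ring
      rw [hc]
      ring_nf
    rwa [h2] at h1
  -- HasSum B (π^2/8 - T)
  have hB : HasSum B (π ^ 2 / 8 - T) := by
    have h1 := (hasSum_nat_add_iff' (f := fun k : ℕ => 1 / (2 * (k:ℝ) + 1) ^ 2) n).mpr odd_basel'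
    rw [← hTdef] at h1
    refine h1.congr_fun fun k => ?_
    simp only [hBdef]
    push_cast
    ring_nf
  -- Summable C
  have hCs : Summable C := by
    rw [← summable_nat_add_iff (2 * n)]
    refine Summable.of_nonneg_of_le (fun k => ?_) (fun k => ?_) odd_basel'.summable
    · simp only [hCdef]
      have hlt : (2 * (k:ℝ) + 1) ^ 2 ≤ (2 * (((k + 2 * n : ℕ)) : ℝ) + 1) ^ 2 - 4 * (n:ℝ) ^ 2 := by
        push_cast
        nlinarith [Nat.cast_nonneg (α := ℝ) k, (Nat.one_le_cast (α := ℝ)).mpr hn]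
      have hpos : (0:ℝ) < (2 * (k:ℝ) + 1) ^ 2 := by positivity
      exact le_of_lt (div_pos one_pos (lt_of_lt_of_le hpos hlt))
    · simp only [hCdef]
      have hlt : (2 * (k:ℝ) + 1) ^ 2 ≤ (2 * (((k + 2 * n : ℕ)) : ℝ) + 1) ^ 2 - 4 * (n:ℝ) ^ 2 := by
        push_cast
        nlinarith [Nat.cast_nonneg (α := ℝ) k, (Nat.one_le_cast (α := ℝ)).mpr hn]
      have hpos : (0:ℝ) < (2 * (k:ℝ) + 1) ^ 2 := by positivity
      exact one_div_le_one_div_of_le hpos hlt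
  -- HasSum C 0 (telescoping)
  have hC0 : HasSum C 0 := by
    set f : ℕ → ℝ := fun k => 1 / (2 * (k:ℝ) + 1 - 2 * n) with hfdef
    have hCf : ∀ k : ℕ, C k = (1 / (4 * n)) * (f k - f (k + 2 * n)) := by
      intro k
      simp only [hCdef, hfdef]
      have hn0 : (n:ℝ) ≠ 0 := Nat.cast_ne_zero.mpr (by omega)
      have h1 := hp k
      have h2 := hp (k + 2 * n)
      have hdk := hd k
      have h3 : (2 * ((k + 2*n : ℕ)):ℝ) + 1 - 2 * n = 2 * (k:ℝ) + 1 + 2 * n := by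
        push_cast; ring
      rw [h3]
      rw [h3] at h2
      field_simp
      ring
    have hZ : ∑ i ∈ Finset.range (2 * n), f i = 0 := by
      have hrefl := Finset.sum_range_reflect (fun i => f i) (2 * n)
      have hneg : ∀ j ∈ Finset.range (2 * n), f (2 * n - 1 - j) = - f j := by
        intro j hj
        have hj' : j < 2 * n := Finset.mem_range.mp hj
        simp only [hfdef]
        have hc : ((2 * n - 1 - j : ℕ) : ℝ) = 2 * (n:ℝ) - 1 - j := by
          have h1 : j ≤ 2 * n - 1 := by omega
          have h2 : 1 ≤ 2 * n := by omega
          push_cast [Nat.cast_sub h1, Nat.cast_sub h2]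
          ring
        rw [hc]
        have h4 : 2 * (2 * (n:ℝ) - 1 - j) + 1 - 2 * n = -(2 * (j:ℝ) + 1 - 2 * n) := by ring
        rw [h4, div_neg]
      have h5 := Finset.sum_congr rfl hneg
      rw [h5, Finset.sum_neg_distrib] at hrefl
      linarith
    have htail : Tendsto (fun N : ℕ => ∑ x ∈ Finset.range (2 * n), f (N + x)) atTop (nhds 0) := by
      have h0 : ∀ x : ℕ, Tendsto (fun N : ℕ => f (N + x)) atTop (nhds 0) := by
        intro x
        have hden : Tendsto (fun N : ℕ => 2 * ((N:ℝ)) + (2 * x + 1 - 2 * n)) atTop atTop := by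
          apply tendsto_atTop_add_const_right
          exact (tendsto_natCast_atTop_atTop (R := ℝ)).const_mul_atTop (by norm_num)
        have h6 := hden.inv_tendsto_atTop
        refine h6.congr fun N => ?_
        simp only [hfdef, Pi.inv_apply, one_div]
        congr 1
        push_cast
        ring
      have h7 := tendsto_finset_sum (Finset.range (2 * n)) (fun x _ => h0 x)
      simpa using h7
    have hP : Tendsto (fun N : ℕ => ∑ k ∈ Finset.range N, C k) atTop (nhds 0) := by
      have heq : ∀ N : ℕ, ∑ k ∈ Finset.range N, C k
          = (1 / (4 * n)) * (0 - ∑ x ∈ Finset.range (2 * n), f (N + x)) := by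
        intro N
        have e1 : ∑ k ∈ Finset.range N, C k
            = (1 / (4 * n)) * (∑ k ∈ Finset.range N, f k - ∑ k ∈ Finset.range N, f (k + 2 * n)) := by
          calc ∑ k ∈ Finset.range N, C k
              = ∑ k ∈ Finset.range N, (1 / (4 * (n:ℝ))) * (f k - f (k + 2 * n)) :=
                Finset.sum_congr rfl fun k _ => hCf k
            _ = (1 / (4 * n)) * ∑ k ∈ Finset.range N, (f k - f (k + 2 * n)) :=
                (Finset.mul_sum _ _ _).symm
            _ = _ := by rw [Finset.sum_sub_distrib]
        rw [e1]
        congr 1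
        have e2 : ∑ k ∈ Finset.range (2 * n + N), f k
            = ∑ k ∈ Finset.range (2 * n), f k + ∑ k ∈ Finset.range N, f (2 * n + k) :=
          Finset.sum_range_add f (2 * n) N
        have e3 : ∑ k ∈ Finset.range (N + 2 * n), f k
            = ∑ k ∈ Finset.range N, f k + ∑ k ∈ Finset.range (2 * n), f (N + k) :=
          Finset.sum_range_add f N (2 * n)
        have e4 : ∑ k ∈ Finset.range N, f (2 * n + k) = ∑ k ∈ Finset.range N, f (k + 2 * n) :=
          Finset.sum_congr rfl fun k _ => by rw [add_comm]
        have e5 : (2 * n + N) = (N + 2 * n) := by omega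
        rw [e5] at e2
        rw [e2, e4] at e3
        linarith [hZ, e3]
      have h9 : Tendsto (fun N : ℕ => (1 / (4 * (n:ℝ))) * (0 - ∑ x ∈ Finset.range (2 * n), f (N + x)))
          atTop (nhds 0) := by
        have := (htail.const_sub 0).const_mul (1 / (4 * (n:ℝ)))
        simpa using this
      exact Tendsto.congr (fun N => (heq N).symm) h9
    have h10 := hCs.hasSum.tendsto_sum_nat
    have h0 : ∑' k, C k = 0 := tendsto_nhds_unique h10 hP
    exact h0 ▸ hCs.hasSum
  -- combine
  have hcomb := ((hA.add hB).mul_left (4⁻¹ : ℝ)).add (hC0.mul_left (2⁻¹ : ℝ))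
  have hval : (4⁻¹ : ℝ) * ((π ^ 2 / 8 + T) + (π ^ 2 / 8 - T)) + (2⁻¹ : ℝ) * 0 = π ^ 2 / 16 := by
    ring
  rw [hval] at hcomb
  have hfin : HasSum (fun k : ℕ =>
      (2 * (k : ℝ) + 1) ^ 2 / ((2 * (k : ℝ) + 1) ^ 2 - 4 * (n : ℝ) ^ 2) ^ 2) (π ^ 2 / 16) := by
    refine hcomb.congr_fun fun k => ?_
    simp only [hAdef, hBdef, hCdef]
    have h1 := hp k
    have h2 := hq k
    have h3 := hd k
    field_simp
    ring
  exact hfin.tsum_eq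
end

section
/- For every integer n ≥ 1, the series ∑_{k≥0} 1 / [k² − (n−1/2)²]² equals π²/(4(n−1/2)²) + 1/(2(n−1/2)⁴). -/
/-!
With `a = n - 1/2`, partial fractions give
`1 / (k² - a²)² = (1 / (k - a)² + 1 / (k + a)²) / (4a²) - (1 / (k - a) - 1 / (k + a)) / (4a³)`.
As `k` runs over `ℕ`, the numbers `k - a` and `-(k + a)` run over the half-integers `j + 1/2`,
`j ∈ ℤ`, with `-a` hit twice; since `∑_{j ∈ ℤ} 1 / (j + 1/2)² = π²` (from `ζ(2) = π²/6`) the first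
part sums to `(π² + 1/a²) / (4a²)`. Since `k + a = (k + 2n - 1) - a`, the second part telescopes to
`∑_{i < 2n-1} 1 / (i - a) = -1/a`, the terms with `i < 2n` cancelling in pairs.
-/

open Real Finset Filter Topology

lemma hasSum_one_div_nat_add_half_sq :
    HasSum (fun k : ℕ => 1 / ((k : ℝ) + 1 / 2) ^ 2) (π ^ 2 / 2) := by
  have heven : HasSum (fun k : ℕ => 1 / ((2 * k : ℕ) : ℝ) ^ 2) (π ^ 2 / 24) := by
    rw [show π ^ 2 / 24 = 1 / 4 * (π ^ 2 / 6) by ring]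
    exact (hasSum_zeta_two.mul_left _).congr_fun fun k => by push_cast; ring
  have hodd : Summable fun k : ℕ => 1 / ((2 * k + 1 : ℕ) : ℝ) ^ 2 :=
    hasSum_zeta_two.summable.comp_injective fun a b h => by
      simp only [Nat.add_right_cancel_iff, mul_right_inj' two_ne_zero] at h; exact h
  have hodd_sum : ∑' k : ℕ, 1 / ((2 * k + 1 : ℕ) : ℝ) ^ 2 = π ^ 2 / 8 := by
    linarith [hasSum_zeta_two.unique
      (HasSum.even_add_odd (f := fun n : ℕ => 1 / (n : ℝ) ^ 2) heven hodd.hasSum)]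
  rw [show π ^ 2 / 2 = 4 * (π ^ 2 / 8) by ring, ← hodd_sum]
  exact (hodd.hasSum.mul_left 4).congr_fun fun k => by push_cast; field_simp; ring

lemma hasSum_int_one_div_add_half_sq :
    HasSum (fun j : ℤ => 1 / ((j : ℝ) + 1 / 2) ^ 2) (π ^ 2) := by
  rw [show π ^ 2 = π ^ 2 / 2 + π ^ 2 / 2 by ring]
  refine .of_nat_of_neg_add_one (by simpa using hasSum_one_div_nat_add_half_sq)
    (hasSum_one_div_nat_add_half_sq.congr_fun fun k => ?_)
  push_cast; ring

lemma hasSum_one_div_sub_sq_add_one_div_add_sq (m : ℤ) :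
    HasSum (fun k : ℕ => 1 / ((k : ℝ) - (m - 1 / 2)) ^ 2 + 1 / ((k : ℝ) + (m - 1 / 2)) ^ 2)
      (π ^ 2 + 1 / ((m : ℝ) - 1 / 2) ^ 2) := by
  have h : HasSum (fun j : ℤ => 1 / (((j - m : ℤ) : ℝ) + 1 / 2) ^ 2) (π ^ 2) :=
    (Equiv.subRight m).hasSum_iff (f := fun j : ℤ => 1 / ((j : ℝ) + 1 / 2) ^ 2) |>.mpr
      hasSum_int_one_div_add_half_sq
  rw [show π ^ 2 + 1 / ((m : ℝ) - 1 / 2) ^ 2 = π ^ 2 + 1 / (((0 - m : ℤ) : ℝ) + 1 / 2) ^ 2 by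
    push_cast; ring]
  exact h.nat_add_neg.congr_fun fun k => by push_cast; ring

theorem hasSum_sub_shift_of_tendsto_zero {G : Type*} [AddCommGroup G] [TopologicalSpace G]
    [IsTopologicalAddGroup G] [T2Space G] {f : ℕ → G} (d : ℕ)
    (hs : Summable fun k => f k - f (k + d)) (hf : Tendsto f atTop (𝓝 0)) :
    HasSum (fun k => f k - f (k + d)) (∑ i ∈ range d, f i) := by
  have partial_sum (N : ℕ) : ∑ k ∈ range N, (f k - f (k + d))
      = ∑ i ∈ range d, f i - ∑ i ∈ range d, f (i + N) := by
    induction N with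
    | zero => simp
    | succ N ih =>
      have hshift : ∑ i ∈ range d, f (i + (N + 1))
          = ∑ i ∈ range d, f (i + N) + f (d + N) - f N := by
        rw [eq_sub_iff_add_eq, ← sum_range_succ (fun i => f (i + N)), sum_range_succ']
        simp only [add_assoc, add_comm 1 N, zero_add]
      rw [sum_range_succ, ih, hshift, add_comm d N]
      abel
  have htail : Tendsto (fun N => ∑ i ∈ range d, f (i + N)) atTop (𝓝 0) := by
    simpa using tendsto_finsetSum (range d) fun i _ =>
      hf.comp ((tendsto_add_atTop_nat i).congr fun N => add_comm N i)
  rw [hs.hasSum_iff_tendsto_nat, funext partial_sum]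
  simpa using tendsto_const_nhds.sub htail

lemma sub_ne_zero_and_add_ne_zero_of_sq_ne_sq {R : Type*} [CommRing R] {a k : R}
    (h : k ^ 2 ≠ a ^ 2) : k - a ≠ 0 ∧ k + a ≠ 0 := by
  constructor <;> intro h' <;> apply h
  · rw [sub_eq_zero.1 h']
  · rw [eq_neg_of_add_eq_zero_left h', neg_sq]

lemma natCast_sq_ne_intCast_sub_half_sq (k : ℕ) (m : ℤ) :
    (k : ℝ) ^ 2 ≠ ((m : ℝ) - 1 / 2) ^ 2 := by
  intro h
  rcases sq_eq_sq_iff_eq_or_eq_neg.1 h with h | h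
  · have : ((2 * k - 2 * m + 1 : ℤ) : ℝ) = 0 := by push_cast; linarith
    norm_cast at this; omega
  · have : ((2 * k + 2 * m - 1 : ℤ) : ℝ) = 0 := by push_cast; linarith
    norm_cast at this; omega

lemma one_div_sub_sub_one_div_add {a k : ℝ} (h : k ^ 2 ≠ a ^ 2) :
    1 / (k - a) - 1 / (k + a) = 2 * a * (1 / (k ^ 2 - a ^ 2)) := by
  obtain ⟨hsub, hadd⟩ := sub_ne_zero_and_add_ne_zero_of_sq_ne_sq h
  have : k ^ 2 - a ^ 2 ≠ 0 := sub_ne_zero.2 h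
  field_simp; ring

lemma one_div_sq_sub_sq_sq {a k : ℝ} (ha : a ≠ 0) (h : k ^ 2 ≠ a ^ 2) :
    1 / (k ^ 2 - a ^ 2) ^ 2
      = (1 / (k - a) ^ 2 + 1 / (k + a) ^ 2) / (4 * a ^ 2)
        - (1 / (k - a) - 1 / (k + a)) / (4 * a ^ 3) := by
  obtain ⟨hsub, hadd⟩ := sub_ne_zero_and_add_ne_zero_of_sq_ne_sq h
  have : k ^ 2 - a ^ 2 ≠ 0 := sub_ne_zero.2 h
  field_simp; ring

lemma summable_one_div_natCast_sq_sub_sq (a : ℝ) :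
    Summable fun k : ℕ => 1 / ((k : ℝ) ^ 2 - a ^ 2) := by
  refine .of_norm_bounded_eventually_nat
    ((Real.summable_one_div_nat_pow.2 one_lt_two).mul_left 2) ?_
  have hlarge : ∀ᶠ k : ℕ in atTop, 2 * a ^ 2 ≤ (k : ℝ) ^ 2 :=
    ((tendsto_pow_atTop two_ne_zero).comp tendsto_natCast_atTop_atTop).eventually_ge_atTop _
  filter_upwards [hlarge, eventually_gt_atTop 0] with k hk hk0
  have hk0' : (0 : ℝ) < (k : ℝ) ^ 2 := by positivity
  rw [Real.norm_eq_abs, abs_of_pos (by rw [one_div_pos]; nlinarith), mul_one_div,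
    div_le_div_iff₀ (by nlinarith) hk0']
  nlinarith

lemma sum_range_two_mul_one_div_sub_half (m : ℕ) :
    ∑ i ∈ range (2 * m), 1 / ((i : ℝ) - (m - 1 / 2)) = 0 := by
  have h := sum_range_reflect (fun i : ℕ => 1 / ((i : ℝ) - (m - 1 / 2))) (2 * m)
  have hneg : ∀ j ∈ range (2 * m),
      1 / (((2 * m - 1 - j : ℕ) : ℝ) - (m - 1 / 2)) = -(1 / ((j : ℝ) - (m - 1 / 2))) := by
    intro j hj
    rw [mem_range] at hj
    rw [Nat.cast_sub (by omega), Nat.cast_sub (by omega), ← div_neg]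
    push_cast; ring_nf
  rw [sum_congr rfl hneg, sum_neg_distrib, neg_eq_iff_add_eq_zero] at h
  linarith

lemma hasSum_one_div_sub_sub_one_div_add (n : ℕ) (hn : 1 ≤ n) :
    HasSum (fun k : ℕ => 1 / ((k : ℝ) - (n - 1 / 2)) - 1 / ((k : ℝ) + (n - 1 / 2)))
      (-(1 / ((n : ℝ) - 1 / 2))) := by
  set a : ℝ := n - 1 / 2 with ha
  set f : ℕ → ℝ := fun k => 1 / ((k : ℝ) - a)
  have hshift (k : ℕ) : f (k + (2 * n - 1)) = 1 / ((k : ℝ) + a) := by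
    simp only [f, ha]; rw [Nat.cast_add, Nat.cast_sub (by omega)]; push_cast; ring_nf
  have hsummable : Summable fun k => f k - f (k + (2 * n - 1)) := by
    simp only [hshift, f]
    refine ((summable_one_div_natCast_sq_sub_sq a).mul_left (2 * a)).congr fun k => ?_
    exact (one_div_sub_sub_one_div_add
      (by simpa [ha] using natCast_sq_ne_intCast_sub_half_sq k n)).symm
  have hf : Tendsto f atTop (𝓝 0) := tendsto_const_nhds.div_atTop
    (tendsto_atTop_add_const_right _ (-a) tendsto_natCast_atTop_atTop)
  have hsum : ∑ i ∈ range (2 * n - 1), f i = -(1 / a) := by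
    have h := sum_range_two_mul_one_div_sub_half n
    rw [show 2 * n = 2 * n - 1 + 1 by omega, sum_range_succ] at h
    have hlast : f (2 * n - 1) = 1 / a := by
      simp only [f, ha]; rw [Nat.cast_sub (by omega)]; push_cast; ring_nf
    rw [← hlast]; linarith
  simpa only [hshift, hsum] using hasSum_sub_shift_of_tendsto_zero _ hsummable hf

theorem stmt1 (n : ℕ) (hn : 1 ≤ n) :
    ∑' k : ℕ, 1 / ((k : ℝ) ^ 2 - ((n : ℝ) - 1 / 2) ^ 2) ^ 2
      = π ^ 2 / (4 * ((n : ℝ) - 1 / 2) ^ 2) + 1 / (2 * ((n : ℝ) - 1 / 2) ^ 4) := by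
  have hk (k : ℕ) : (k : ℝ) ^ 2 ≠ ((n : ℝ) - 1 / 2) ^ 2 := by
    exact_mod_cast natCast_sq_ne_intCast_sub_half_sq k n
  have ha : (n : ℝ) - 1 / 2 ≠ 0 := by
    have : (1 : ℝ) ≤ n := by exact_mod_cast hn
    linarith
  have hsq := hasSum_one_div_sub_sq_add_one_div_add_sq n
  have htel := hasSum_one_div_sub_sub_one_div_add n hn
  push_cast at hsq
  set a : ℝ := (n : ℝ) - 1 / 2
  have hsum := (hsq.div_const (4 * a ^ 2)).sub (htel.div_const (4 * a ^ 3))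
  rw [(hsum.congr_fun fun k => one_div_sq_sub_sq_sq ha (hk k)).tsum_eq]
  field_simp
  ring
end

section
/- Let −1 < ν < 0. Let (z_0^ν)' be the unique positive zero of I_ν', where I_ν is the modified Bessel function of the first kind, let z_1^ν be the first positive zero of J_ν, and z_1^{ν+1} the first positive zero of J_{ν+1}. Then (z_0^ν)' < z_1^ν < z_1^{ν+1}. -/
open Real

noncomputable def besselJ (ν x : ℝ) : ℝ :=
  ∑' m : ℕ, (-1 : ℝ) ^ m / (m.factorial * Real.Gamma (m + ν + 1)) * (x / 2) ^ (2 * (m : ℝ) + ν)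

noncomputable def besselI (ν x : ℝ) : ℝ :=
  ∑' m : ℕ, (1 : ℝ) / (m.factorial * Real.Gamma (m + ν + 1)) * (x / 2) ^ (2 * (m : ℝ) + ν)

/-!
With u = (x/2)² and the entire series F(u) = ∑ uᵐ / (m! Γ(m+ν+1)), J_ν(x) = (x/2)^ν F(-u)
and I_ν(x) = (x/2)^ν F(u), while x I_ν'(x) = 2 (x/2)^ν G(u) with
G(u) = ∑ (m + ν/2) uᵐ / (m! Γ(m+ν+1)). Only the constant coefficient of G can be negative, so
G is monotone on [0, ∞) and G ≤ 0 up to u₀ = (z₀/2)². Comparing (-1)ᵐ ≥ 1 - 2m termwise gives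
F(-u) ≥ (1+ν) F(u) - 2 G(u) > 0 there, so J_ν has no zero in (0, z₀].

For the second inequality, (x^(ν+1) J_(ν+1))' = x^(ν+1) J_ν is positive on (0, z₁), so
x^(ν+1) J_(ν+1)(x), which vanishes at 0, is positive on (0, z₁].
-/

open Set Filter Topology

noncomputable def powSeries (d : ℕ → ℝ) (u : ℝ) : ℝ := ∑' m, d m * u ^ m

def EntireCoeffs (d : ℕ → ℝ) : Prop := ∀ u : ℝ, Summable fun m => d m * u ^ m

namespace EntireCoeffs

variable {d : ℕ → ℝ}

theorem natCast_mul (hd : EntireCoeffs d) : EntireCoeffs fun m => m * d m := by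
  intro u
  refine .of_norm_bounded ((summable_abs_iff.2 (hd (2 * |u|)))) fun m => ?_
  have hm : (m : ℝ) ≤ 2 ^ m := by exact_mod_cast Nat.lt_two_pow_self.le
  rw [Real.norm_eq_abs, abs_mul, abs_mul, abs_mul, abs_pow, abs_pow, Nat.abs_cast, abs_mul,
    abs_two, abs_abs, mul_pow]
  calc (m : ℝ) * |d m| * |u| ^ m ≤ 2 ^ m * |d m| * |u| ^ m := by gcongr
    _ = |d m| * (2 ^ m * |u| ^ m) := by ring

theorem hasDerivAt (hd : EntireCoeffs d) (u : ℝ) :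
    HasDerivAt (powSeries d) (∑' m, m * d m * u ^ (m - 1)) u := by
  set R := |u| + 1
  have hR : 1 ≤ R := by simp [R]
  have hbound : Summable fun m : ℕ => |(m : ℝ) * d m * R ^ m| :=
    summable_abs_iff.2 (hd.natCast_mul R)
  have hu : u ∈ Metric.ball (0 : ℝ) R := by simp [R]
  refine hasDerivAt_tsum_of_isPreconnected (g := fun (m : ℕ) (y : ℝ) => d m * y ^ m)
    (g' := fun (m : ℕ) (y : ℝ) => m * d m * y ^ (m - 1)) hbound Metric.isOpen_ball
    (convex_ball 0 R).isPreconnected (fun m y _ => ?_) (fun m y hy => ?_)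
    (Metric.mem_ball_self (by linarith)) (hd 0) hu
  · exact ((hasDerivAt_pow m y).const_mul (d m)).congr_deriv (by ring)
  · rw [mem_ball_zero_iff, Real.norm_eq_abs] at hy
    rw [Real.norm_eq_abs, abs_mul, abs_mul, abs_pow, abs_mul, abs_mul, abs_pow,
      abs_of_pos (by linarith : 0 < R)]
    gcongr
    calc |y| ^ (m - 1) ≤ R ^ (m - 1) := by gcongr
      _ ≤ R ^ m := pow_le_pow_right₀ hR (Nat.sub_le m 1)

theorem continuous (hd : EntireCoeffs d) : Continuous (powSeries d) :=
  continuous_iff_continuousAt.2 fun u => (hd.hasDerivAt u).continuousAt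

theorem natCast_add_mul (hd : EntireCoeffs d) (a : ℝ) : EntireCoeffs fun m => (m + a) * d m :=
  fun u => ((hd.natCast_mul u).add ((hd u).mul_left a)).congr fun m => by ring

theorem powSeries_add_mul (hd : EntireCoeffs d) (a u : ℝ) :
    powSeries (fun m => (m + a) * d m) u = powSeries (fun m => m * d m) u + a * powSeries d u := by
  simp only [powSeries, ← tsum_mul_left, ← (hd.natCast_mul u).tsum_add ((hd u).mul_left a)]
  exact tsum_congr fun m => by ring

theorem monotoneOn_powSeries (hd : EntireCoeffs d) (h : ∀ m, m ≠ 0 → 0 ≤ d m) :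
    MonotoneOn (powSeries d) (Ici 0) := by
  intro u hu v hv huv
  refine (hd u).tsum_le_tsum (fun m => ?_) (hd v)
  rcases eq_or_ne m 0 with rfl | hm
  · simp
  · exact mul_le_mul_of_nonneg_left (pow_le_pow_left₀ hu huv m) (h m hm)

theorem powSeries_pos (hd : EntireCoeffs d) (h : ∀ m, 0 ≤ d m) (h0 : 0 < d 0) {u : ℝ}
    (hu : 0 ≤ u) : 0 < powSeries d u :=
  (hd u).tsum_pos (fun m => mul_nonneg (h m) (pow_nonneg hu m)) 0 (by simpa using h0)

theorem powSeries_sub_two_mul_le (hd : EntireCoeffs d) (h : ∀ m, 0 ≤ d m) {u : ℝ}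
    (hu : 0 ≤ u) :
    powSeries d u - 2 * powSeries (fun m => m * d m) u ≤ powSeries d (-u) := by
  rw [powSeries, powSeries, ← tsum_mul_left, ← (hd u).tsum_sub ((hd.natCast_mul u).mul_left 2)]
  refine Summable.tsum_le_tsum (fun m => ?_) ((hd u).sub ((hd.natCast_mul u).mul_left 2)) (hd (-u))
  have hsign : 1 - 2 * (m : ℝ) ≤ (-1) ^ m := by
    rcases eq_or_ne m 0 with rfl | hm
    · simp
    · have : (1 : ℝ) ≤ m := by exact_mod_cast Nat.one_le_iff_ne_zero.2 hm
      linarith [(abs_le.1 (abs_neg_one_pow (α := ℝ) m).le).1]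
  rw [neg_pow]
  nlinarith [mul_nonneg (h m) (pow_nonneg hu m)]

end EntireCoeffs

theorem powSeries_natCast_mul (d : ℕ → ℝ) (u : ℝ) :
    powSeries (fun m => m * d m) u = u * ∑' m, m * d m * u ^ (m - 1) := by
  rw [powSeries, ← tsum_mul_left]
  refine tsum_congr fun m => ?_
  rcases m with _ | m
  · simp
  · rw [Nat.add_sub_cancel, pow_succ]; ring

theorem powSeries_zero (d : ℕ → ℝ) : powSeries d 0 = d 0 := by
  rw [powSeries, tsum_eq_single 0 fun m hm => by simp [hm]]
  simp

theorem ContinuousOn.pos_of_pos_of_ne_zero {g : ℝ → ℝ} {a b x : ℝ}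
    (hg : ContinuousOn g (Ico a b)) (ha : 0 < g a) (hne : ∀ y ∈ Ioo a b, g y ≠ 0)
    (hx : x ∈ Ico a b) : 0 < g x := by
  by_contra! hgx
  obtain ⟨y, hy, hgy⟩ := isPreconnected_Ico.intermediate_value hx
    (left_mem_Ico.2 (hx.1.trans_lt hx.2)) hg ⟨hgx, ha.le⟩
  rcases eq_or_lt_of_le hy.1 with rfl | hay
  · exact ha.ne' hgy
  · exact hne y ⟨hay, hy.2⟩ hgy

theorem hasDerivAt_half_sq (x : ℝ) : HasDerivAt (fun y : ℝ => (y / 2) ^ 2) (x / 2) x :=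
  (((hasDerivAt_id' x).div_const 2).pow 2).congr_deriv (by ring)

theorem rpow_two_mul_natCast_add {t : ℝ} (ht : 0 < t) (ν : ℝ) (m : ℕ) :
    t ^ (2 * (m : ℝ) + ν) = t ^ ν * (t ^ 2) ^ m := by
  rw [add_comm, rpow_add ht, ← pow_mul, ← rpow_natCast]
  push_cast
  rfl

noncomputable def besselCoeff (ν : ℝ) (m : ℕ) : ℝ := 1 / (m.factorial * Gamma (m + ν + 1))

section besselCoeff

variable {ν : ℝ}

theorem besselCoeff_pos (hν : -1 < ν) (m : ℕ) : 0 < besselCoeff ν m := by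
  have := Gamma_pos_of_pos (by linarith [m.cast_nonneg (α := ℝ)] : (0 : ℝ) < m + ν + 1)
  unfold besselCoeff
  positivity

theorem besselCoeff_add_one_mul (hν : -1 < ν) (m : ℕ) :
    besselCoeff (ν + 1) m * (m + ν + 1) = besselCoeff ν m := by
  have hpos : (0 : ℝ) < m + ν + 1 := by linarith [m.cast_nonneg (α := ℝ)]
  have := (Gamma_pos_of_pos hpos).ne'
  rw [besselCoeff, besselCoeff, ← add_assoc, Gamma_add_one hpos.ne']
  field_simp

theorem besselCoeff_succ_mul (hν : -1 < ν) (m : ℕ) :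
    besselCoeff ν (m + 1) * ((m + 1) * (m + ν + 1)) = besselCoeff ν m := by
  have hpos : (0 : ℝ) < m + ν + 1 := by linarith [m.cast_nonneg (α := ℝ)]
  have := (Gamma_pos_of_pos hpos).ne'
  rw [besselCoeff, besselCoeff, Nat.factorial_succ, Nat.cast_mul, Nat.cast_succ,
    show (m + 1 : ℝ) + ν + 1 = (m + ν + 1) + 1 by ring, Gamma_add_one hpos.ne']
  field_simp

theorem entireCoeffs_besselCoeff (hν : -1 < ν) : EntireCoeffs (besselCoeff ν) := by
  intro u
  rcases eq_or_ne u 0 with rfl | hu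
  · exact summable_of_ne_finset_zero (s := {0}) fun m hm => by simp_all
  refine summable_of_ratio_test_tendsto_lt_one zero_lt_one
    (.of_forall fun m => mul_ne_zero (besselCoeff_pos hν m).ne' (pow_ne_zero m hu)) ?_
  have hratio : ∀ m : ℕ,
      ‖besselCoeff ν (m + 1) * u ^ (m + 1)‖ / ‖besselCoeff ν m * u ^ m‖
        = |u| / ((m + 1) * (m + ν + 1)) := by
    intro m
    have hc := besselCoeff_pos hν (m + 1)
    have hpos : (0 : ℝ) < (m + 1) * (m + ν + 1) := by
      have : (0 : ℝ) ≤ m := m.cast_nonneg; nlinarith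
    rw [← besselCoeff_succ_mul hν m, norm_mul, norm_mul, norm_mul, norm_pow, norm_pow,
      Real.norm_of_nonneg hc.le, Real.norm_of_nonneg hpos.le, Real.norm_eq_abs]
    have := pow_pos (abs_pos.2 hu) m
    field_simp
    ring
  simp_rw [hratio]
  refine tendsto_const_nhds.div_atTop (Tendsto.atTop_mul_atTop₀ ?_ ?_)
  · exact tendsto_atTop_add_const_right _ _ tendsto_natCast_atTop_atTop
  · exact tendsto_atTop_add_const_right _ _
      (tendsto_atTop_add_const_right _ _ tendsto_natCast_atTop_atTop)

end besselCoeff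

theorem besselJ_eq_powSeries (ν : ℝ) {x : ℝ} (hx : 0 < x) :
    besselJ ν x = (x / 2) ^ ν * powSeries (besselCoeff ν) (-(x / 2) ^ 2) := by
  rw [besselJ, powSeries, ← tsum_mul_left]
  refine tsum_congr fun m => ?_
  rw [rpow_two_mul_natCast_add (half_pos hx), neg_pow ((x / 2) ^ 2), besselCoeff]
  ring

theorem besselI_eq_powSeries (ν : ℝ) {x : ℝ} (hx : 0 < x) :
    besselI ν x = (x / 2) ^ ν * powSeries (besselCoeff ν) ((x / 2) ^ 2) := by
  rw [besselI, powSeries, ← tsum_mul_left]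
  refine tsum_congr fun m => ?_
  rw [rpow_two_mul_natCast_add (half_pos hx), besselCoeff]
  ring

theorem hasDerivAt_besselI {ν x : ℝ} (hν : -1 < ν) (hx : 0 < x) :
    HasDerivAt (besselI ν)
      (2 / x * (x / 2) ^ ν * powSeries (fun m => (m + ν / 2) * besselCoeff ν m) ((x / 2) ^ 2))
      x := by
  have hc := entireCoeffs_besselCoeff hν
  have hhalf : HasDerivAt (fun y : ℝ => y / 2) (1 / 2) x := (hasDerivAt_id x).div_const 2
  have hA := hhalf.rpow_const (p := ν) (Or.inl (half_pos hx).ne')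
  have hB : HasDerivAt (fun y => powSeries (besselCoeff ν) ((y / 2) ^ 2))
      ((∑' m, m * besselCoeff ν m * ((x / 2) ^ 2) ^ (m - 1)) * (x / 2)) x :=
    (hc.hasDerivAt _).comp x (hasDerivAt_half_sq x)
  have hI :
      besselI ν =ᶠ[𝓝 x] fun y => (y / 2) ^ ν * powSeries (besselCoeff ν) ((y / 2) ^ 2) :=
    eventually_of_mem (Ioi_mem_nhds hx) fun y hy => besselI_eq_powSeries ν hy
  refine ((hA.mul hB).congr_of_eventuallyEq hI).congr_deriv ?_
  rw [hc.powSeries_add_mul, powSeries_natCast_mul, rpow_sub_one (half_pos hx).ne']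
  field_simp
  ring

theorem besselJ_pos_of_le_of_deriv_besselI_eq_zero {ν z x : ℝ} (hν : -1 < ν) (hz : 0 < z)
    (hI : deriv (besselI ν) z = 0) (hx : 0 < x) (hxz : x ≤ z) : 0 < besselJ ν x := by
  have hc := entireCoeffs_besselCoeff hν
  have hc_nonneg := fun m => (besselCoeff_pos hν m).le
  set G := powSeries (fun m => (m + ν / 2) * besselCoeff ν m)
  have hGz : G ((z / 2) ^ 2) = 0 := by
    rw [(hasDerivAt_besselI hν hz).deriv] at hI
    have := rpow_pos_of_pos (half_pos hz) ν
    simpa [hz.ne', this.ne'] using hI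
  have hG_mono : MonotoneOn G (Ici 0) :=
    (hc.natCast_add_mul (ν / 2)).monotoneOn_powSeries fun m hm => by
      have : (1 : ℝ) ≤ m := by exact_mod_cast Nat.one_le_iff_ne_zero.2 hm
      nlinarith [hc_nonneg m]
  have hGx : G ((x / 2) ^ 2) ≤ 0 := by
    rw [← hGz]
    exact hG_mono (sq_nonneg (x / 2)) (sq_nonneg (z / 2)) (by gcongr)
  set F := powSeries (besselCoeff ν)
  have hF : 0 < F ((x / 2) ^ 2) := hc.powSeries_pos hc_nonneg (besselCoeff_pos hν 0) (sq_nonneg _)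
  rw [besselJ_eq_powSeries ν hx]
  refine mul_pos (rpow_pos_of_pos (half_pos hx) ν) ?_
  calc 0 < (1 + ν) * F ((x / 2) ^ 2) := mul_pos (by linarith) hF
    _ ≤ (1 + ν) * F ((x / 2) ^ 2) - 2 * G ((x / 2) ^ 2) := by linarith
    _ = F ((x / 2) ^ 2) - 2 * powSeries (fun m => m * besselCoeff ν m) ((x / 2) ^ 2) := by
      rw [show G _ = _ from hc.powSeries_add_mul (ν / 2) _]; ring
    _ ≤ F (-(x / 2) ^ 2) := hc.powSeries_sub_two_mul_le hc_nonneg (sq_nonneg _)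

theorem powSeries_besselCoeff_neg_pos {ν z x : ℝ} (hν : -1 < ν)
    (hJ : ∀ y ∈ Ioo 0 z, besselJ ν y ≠ 0) (hx : x ∈ Ico 0 z) :
    0 < powSeries (besselCoeff ν) (-(x / 2) ^ 2) := by
  have hcont := (entireCoeffs_besselCoeff hν).continuous
  refine ContinuousOn.pos_of_pos_of_ne_zero
    (g := fun y => powSeries (besselCoeff ν) (-(y / 2) ^ 2)) (by fun_prop) ?_
    (fun y hy hF => hJ y hy ?_) hx
  · norm_num [powSeries_zero, besselCoeff_pos hν 0]
  · rw [besselJ_eq_powSeries ν hy.1, hF, mul_zero]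

/-- The identity `(x^(ν+1) J_(ν+1)(x))' = x^(ν+1) J_ν(x)` in the variable `v = (x/2)²`. -/
theorem hasDerivAt_rpow_mul_powSeries_besselCoeff_neg {ν v : ℝ} (hν : -1 < ν) (hv : 0 < v) :
    HasDerivAt (fun w => w ^ (ν + 1) * powSeries (besselCoeff (ν + 1)) (-w))
      (v ^ ν * powSeries (besselCoeff ν) (-v)) v := by
  have hc := entireCoeffs_besselCoeff (by linarith : -1 < ν + 1)
  have hA : HasDerivAt (fun w => w ^ (ν + 1)) ((ν + 1) * v ^ ν) v := by
    simpa using hasDerivAt_rpow_const (p := ν + 1) (Or.inl hv.ne')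
  have hB : HasDerivAt (fun w => powSeries (besselCoeff (ν + 1)) (-w))
      ((∑' m, m * besselCoeff (ν + 1) m * (-v) ^ (m - 1)) * -1) v :=
    (hc.hasDerivAt (-v)).comp v (hasDerivAt_neg v)
  refine (hA.mul hB).congr_deriv ?_
  have hcoeff : besselCoeff ν = fun m => (m + (ν + 1)) * besselCoeff (ν + 1) m :=
    funext fun m => by rw [← besselCoeff_add_one_mul hν]; ring
  rw [hcoeff, hc.powSeries_add_mul, powSeries_natCast_mul, rpow_add_one hv.ne']
  ring

theorem besselJ_add_one_pos {ν z x : ℝ} (hν : -1 < ν)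
    (hJ : ∀ y ∈ Ioo 0 z, besselJ ν y ≠ 0) (hx : 0 < x) (hxz : x ≤ z) :
    0 < besselJ (ν + 1) x := by
  have hc := entireCoeffs_besselCoeff (by linarith : -1 < ν + 1)
  set Ψ := fun w : ℝ => w ^ (ν + 1) * powSeries (besselCoeff (ν + 1)) (-w)
  have hΨ_cont : Continuous Ψ :=
    (continuous_rpow_const (by linarith)).mul (hc.continuous.comp continuous_neg)
  have hΨ_mono : StrictMonoOn (Ψ ∘ fun y => (y / 2) ^ 2) (Icc 0 z) := by
    refine strictMonoOn_of_deriv_pos (convex_Icc 0 z)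
      (hΨ_cont.comp (by fun_prop)).continuousOn fun y hy => ?_
    rw [interior_Icc] at hy
    have hy2 : 0 < (y / 2) ^ 2 := pow_pos (half_pos hy.1) 2
    rw [((hasDerivAt_rpow_mul_powSeries_besselCoeff_neg hν hy2).comp y
      (hasDerivAt_half_sq y)).deriv]
    exact mul_pos (mul_pos (rpow_pos_of_pos hy2 ν)
      (powSeries_besselCoeff_neg_pos hν hJ ⟨hy.1.le, hy.2⟩)) (half_pos hy.1)
  have hΨx : 0 < Ψ ((x / 2) ^ 2) := by
    have := hΨ_mono ⟨le_rfl, hx.le.trans hxz⟩ ⟨hx.le, hxz⟩ hx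
    simpa [Ψ, zero_rpow (by linarith : ν + 1 ≠ 0)] using this
  rw [besselJ_eq_powSeries (ν + 1) hx]
  exact mul_pos (rpow_pos_of_pos (half_pos hx) _)
    (pos_of_mul_pos_right hΨx (rpow_nonneg (sq_nonneg _) _))

theorem stmt18_general (ν : ℝ) (hν₁ : -1 < ν)
    (z₀ : ℝ) (hz₀p : 0 < z₀) (hz₀ : deriv (besselI ν) z₀ = 0)
    (z₁ : ℝ) (hz₁p : 0 < z₁) (hz₁ : besselJ ν z₁ = 0)
    (hz₁f : ∀ x, 0 < x → besselJ ν x = 0 → z₁ ≤ x)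
    (w₁ : ℝ) (hw₁p : 0 < w₁) (hw₁ : besselJ (ν + 1) w₁ = 0) :
    z₀ < z₁ ∧ z₁ < w₁ := by
  have hz₀z₁ : z₀ < z₁ := lt_of_not_ge fun h =>
    (besselJ_pos_of_le_of_deriv_besselI_eq_zero hν₁ hz₀p hz₀ hz₁p h).ne' hz₁
  have hJ : ∀ x ∈ Ioo 0 z₁, besselJ ν x ≠ 0 := fun x hx h => (hz₁f x hx.1 h).not_gt hx.2
  exact ⟨hz₀z₁, lt_of_not_ge fun h => (besselJ_add_one_pos hν₁ hJ hw₁p h).ne' hw₁⟩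

theorem stmt18 (ν : ℝ) (hν₁ : -1 < ν) (hν₂ : ν < 0)
    (z₀ : ℝ) (hz₀p : 0 < z₀) (hz₀ : deriv (besselI ν) z₀ = 0)
    (hz₀u : ∀ x, 0 < x → deriv (besselI ν) x = 0 → x = z₀)
    (z₁ : ℝ) (hz₁p : 0 < z₁) (hz₁ : besselJ ν z₁ = 0)
    (hz₁f : ∀ x, 0 < x → besselJ ν x = 0 → z₁ ≤ x)
    (w₁ : ℝ) (hw₁p : 0 < w₁) (hw₁ : besselJ (ν + 1) w₁ = 0)
    (hw₁f : ∀ x, 0 < x → besselJ (ν + 1) x = 0 → w₁ ≤ x) :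
    z₀ < z₁ ∧ z₁ < w₁ :=
  stmt18_general ν hν₁ z₀ hz₀p hz₀ z₁ hz₁p hz₁ hz₁f w₁ hw₁p hw₁
end
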